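/- Let a and c be natural numbers and let s and t be multisets of positive natural numbers. If X^a · ∏_{b ∈ s}(1 − X^b) = X^c · ∏_{d ∈ t}(1 − X^d) in the polynomial ring ℤ[X], then a = c and s = t. -/

import Mathlib

/-!
Every factor `1 - X ^ b` has constant term `1`, so the trailing degree of each side is the
exponent of `X`; this gives `a = c`, and `X ^ a` cancels. If the products over `s` and `t`
agree but `s ≠ t`, let `m` be the least number whose multiplicities in `s` and `t` differ.
Cancelling the common factors with `b < m` leaves products of factors with `b ≥ m`, whose
coefficient of `X ^ m` is minus the multiplicity of `m`: a contradiction.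
-/

open Polynomial

section ProdOneSubXPow

variable (R : Type*) [CommRing R]

noncomputable def prodOneSubXPow (s : Multiset ℕ) : R[X] :=
  (s.map fun b => 1 - (X : R[X]) ^ b).prod

variable {R}

theorem prodOneSubXPow_add (s t : Multiset ℕ) :
    prodOneSubXPow R (s + t) = prodOneSubXPow R s * prodOneSubXPow R t := by
  simp only [prodOneSubXPow, Multiset.map_add, Multiset.prod_add]

theorem prodOneSubXPow_cons (b : ℕ) (s : Multiset ℕ) :
    prodOneSubXPow R (b ::ₘ s) = (1 - X ^ b) * prodOneSubXPow R s := by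
  simp only [prodOneSubXPow, Multiset.map_cons, Multiset.prod_cons]

theorem coeff_zero_prodOneSubXPow {s : Multiset ℕ} (hs : ∀ b ∈ s, 0 < b) :
    (prodOneSubXPow R s).coeff 0 = 1 := by
  rw [prodOneSubXPow, coeff_zero_eq_eval_zero, eval_multiset_prod, Multiset.map_map]
  refine Multiset.prod_eq_one fun x hx => ?_
  obtain ⟨b, hb, rfl⟩ := Multiset.mem_map.mp hx
  simp [zero_pow (hs b hb).ne']

theorem prodOneSubXPow_ne_zero [Nontrivial R] {s : Multiset ℕ} (hs : ∀ b ∈ s, 0 < b) :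
    prodOneSubXPow R s ≠ 0 := fun h0 => by
  simpa [h0] using coeff_zero_prodOneSubXPow (R := R) hs

theorem natTrailingDegree_prodOneSubXPow [Nontrivial R] {s : Multiset ℕ}
    (hs : ∀ b ∈ s, 0 < b) : (prodOneSubXPow R s).natTrailingDegree = 0 :=
  natTrailingDegree_eq_zero.mpr (Or.inr (by simp [coeff_zero_prodOneSubXPow hs]))

/-- Modulo `X ^ (m + 1)`, the factors with `b > m` are `1`, and each factor with `b = m`
contributes `-X ^ m`. -/
theorem coeff_prodOneSubXPow_of_le {m : ℕ} (hm : 0 < m) {s : Multiset ℕ}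
    (hs : ∀ b ∈ s, m ≤ b) : (prodOneSubXPow R s).coeff m = -(s.count m : R) := by
  induction s using Multiset.induction with
  | empty => simp [prodOneSubXPow, coeff_one, hm.ne']
  | cons b s ih =>
    have hmb : m ≤ b := hs b (Multiset.mem_cons_self b s)
    have hs' : ∀ x ∈ s, m ≤ x := fun x hx => hs x (Multiset.mem_cons_of_mem hx)
    rw [prodOneSubXPow_cons, sub_mul, one_mul, coeff_sub, ih hs', mul_comm, coeff_mul_X_pow']
    rcases hmb.eq_or_lt with rfl | hlt
    · rw [if_pos le_rfl, Nat.sub_self,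
        coeff_zero_prodOneSubXPow fun x hx => hm.trans_le (hs' x hx), Multiset.count_cons_self]
      push_cast
      ring
    · simp [not_le.mpr hlt, Multiset.count_cons_of_ne hlt.ne]

theorem eq_of_prodOneSubXPow_eq [IsDomain R] [CharZero R] {s t : Multiset ℕ}
    (hs : ∀ b ∈ s, 0 < b) (ht : ∀ d ∈ t, 0 < d)
    (h : prodOneSubXPow R s = prodOneSubXPow R t) : s = t := by
  classical
  by_contra hne
  have hex : ∃ m, s.count m ≠ t.count m := by
    by_contra! hall
    exact hne (Multiset.ext.mpr hall)
  set m := Nat.find hex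
  have hm : s.count m ≠ t.count m := Nat.find_spec hex
  have hm0 : 0 < m := by
    refine Nat.pos_of_ne_zero fun h0 => hm ?_
    rw [h0, Multiset.count_eq_zero.mpr fun h => (hs 0 h).false,
      Multiset.count_eq_zero.mpr fun h => (ht 0 h).false]
  have hlow : s.filter (· < m) = t.filter (· < m) := by
    ext k
    simp only [Multiset.count_filter]
    split_ifs with hk
    · exact not_not.mp (Nat.find_min hex hk)
    · rfl
  have hhigh :
      prodOneSubXPow R (s.filter (¬ · < m)) = prodOneSubXPow R (t.filter (¬ · < m)) := by
    refine mul_left_cancel₀ (prodOneSubXPow_ne_zero (s := s.filter (· < m))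
      fun b hb => hs b (Multiset.mem_of_mem_filter hb)) ?_
    rw [← prodOneSubXPow_add, Multiset.filter_add_not, hlow, ← prodOneSubXPow_add,
      Multiset.filter_add_not, h]
  have hcoeff (u : Multiset ℕ) :
      (prodOneSubXPow R (u.filter (¬ · < m))).coeff m = -(u.count m : R) := by
    rw [coeff_prodOneSubXPow_of_le hm0 fun b hb => not_lt.mp (Multiset.mem_filter.mp hb).2,
      Multiset.count_filter_of_pos (p := (¬ · < m)) (lt_irrefl m)]
  have hcount := congrArg (coeff · m) hhigh
  rw [hcoeff, hcoeff, neg_inj, Nat.cast_inj] at hcount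
  exact hm hcount

end ProdOneSubXPow

/-- If X^a · ∏_{b ∈ s}(1 − X^b) = X^c · ∏_{d ∈ t}(1 − X^d) in ℤ[X], with s, t
multisets of positive natural numbers, then a = c and s = t. -/
theorem stmt_4 (a c : ℕ) (s t : Multiset ℕ)
    (hs : ∀ b ∈ s, 0 < b) (ht : ∀ d ∈ t, 0 < d)
    (h : (X : ℤ[X]) ^ a * (s.map (fun b => 1 - (X : ℤ[X]) ^ b)).prod =
         (X : ℤ[X]) ^ c * (t.map (fun d => 1 - (X : ℤ[X]) ^ d)).prod) :
    a = c ∧ s = t := by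
  change X ^ a * prodOneSubXPow ℤ s = X ^ c * prodOneSubXPow ℤ t at h
  have hac : a = c := by
    have htrail := congrArg natTrailingDegree h
    rwa [mul_comm, natTrailingDegree_mul_X_pow (prodOneSubXPow_ne_zero hs), mul_comm,
      natTrailingDegree_mul_X_pow (prodOneSubXPow_ne_zero ht), natTrailingDegree_prodOneSubXPow hs,
      natTrailingDegree_prodOneSubXPow ht, zero_add, zero_add] at htrail
  subst hac
  exact ⟨rfl, eq_of_prodOneSubXPow_eq hs ht (mul_left_cancel₀ (pow_ne_zero a X_ne_zero) h)⟩
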